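/- arXiv:1803.07696 — 4 statements merged into one kernel-verified Lean document; each statement's English description precedes it below -/
import Mathlib

section
/- Let 1 ≤ t ≤ t+l−1 ≤ T. If λ ∈ ℝ^{nl}, ω ∈ ℝ^r and μ ∈ ℝ^n satisfy −F_x(t,l)·λ + Φ_x(t,l)·ω = −V(t,l)·μ and F_u(t,l)·λ + Φ_u(t,l)·ω = 0, then H₁(t,l)·ω + H₂(t,l)·μ = 0, i.e. the stacked vector (ω, μ) ∈ ℝ^{r+n} lies in the kernel of the recovery matrix H(t,l). -/
open Matrix

noncomputable section

variable {n m r : ℕ}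

/-- Block upper bidiagonal matrix `F_x(t,l)` (0-based block indices): diagonal blocks are
`I_n`, and block `(i, i+1)` is `-(A (t+i))ᵀ`. -/
def Fx (A : ℕ → Matrix (Fin n) (Fin n) ℝ) (t l : ℕ) :
    Matrix (Fin l × Fin n) (Fin l × Fin n) ℝ :=
  fun ip jq =>
    if ip.1 = jq.1 then (if ip.2 = jq.2 then (1 : ℝ) else 0)
    else if (jq.1 : ℕ) = (ip.1 : ℕ) + 1 then -((A (t + (ip.1 : ℕ)))ᵀ ip.2 jq.2)
    else 0

/-- Block diagonal matrix `F_u(t,l)` with diagonal blocks `(B (t+i))ᵀ`. -/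
def Fu (B : ℕ → Matrix (Fin n) (Fin m) ℝ) (t l : ℕ) :
    Matrix (Fin l × Fin m) (Fin l × Fin n) ℝ :=
  fun ip jq => if ip.1 = jq.1 then (B (t + (ip.1 : ℕ)))ᵀ ip.2 jq.2 else 0

/-- Vertical stack `Φ_x(t,l)` of the blocks `(G (t+i))ᵀ`. -/
def Phix (G : ℕ → Matrix (Fin r) (Fin n) ℝ) (t l : ℕ) :
    Matrix (Fin l × Fin n) (Fin r) ℝ :=
  fun ip q => (G (t + (ip.1 : ℕ)))ᵀ ip.2 q

/-- Vertical stack `Φ_u(t,l)` of the blocks `(D (t+i))ᵀ`. -/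
def Phiu (D : ℕ → Matrix (Fin r) (Fin m) ℝ) (t l : ℕ) :
    Matrix (Fin l × Fin m) (Fin r) ℝ :=
  fun ip q => (D (t + (ip.1 : ℕ)))ᵀ ip.2 q

/-- `V(t,l)`: all `n×n` blocks zero except the last one, which is `(A (t+l-1))ᵀ`. -/
def Vm (A : ℕ → Matrix (Fin n) (Fin n) ℝ) (t l : ℕ) :
    Matrix (Fin l × Fin n) (Fin n) ℝ :=
  fun ip q => if (ip.1 : ℕ) = l - 1 then (A (t + l - 1))ᵀ ip.2 q else 0

/-- `H₁(t,l) = F_u(t,l) · F_x(t,l)⁻¹ · Φ_x(t,l) + Φ_u(t,l)`. -/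
def H1m (A : ℕ → Matrix (Fin n) (Fin n) ℝ) (B : ℕ → Matrix (Fin n) (Fin m) ℝ)
    (G : ℕ → Matrix (Fin r) (Fin n) ℝ) (D : ℕ → Matrix (Fin r) (Fin m) ℝ) (t l : ℕ) :
    Matrix (Fin l × Fin m) (Fin r) ℝ :=
  Fu B t l * (Fx A t l)⁻¹ * Phix G t l + Phiu D t l

/-- `H₂(t,l) = F_u(t,l) · F_x(t,l)⁻¹ · V(t,l)`. -/
def H2m (A : ℕ → Matrix (Fin n) (Fin n) ℝ) (B : ℕ → Matrix (Fin n) (Fin m) ℝ) (t l : ℕ) :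
    Matrix (Fin l × Fin m) (Fin n) ℝ :=
  Fu B t l * (Fx A t l)⁻¹ * Vm A t l

/-- The recovery matrix `H(t,l) = [H₁(t,l)  H₂(t,l)]`. -/
def Hm (A : ℕ → Matrix (Fin n) (Fin n) ℝ) (B : ℕ → Matrix (Fin n) (Fin m) ℝ)
    (G : ℕ → Matrix (Fin r) (Fin n) ℝ) (D : ℕ → Matrix (Fin r) (Fin m) ℝ) (t l : ℕ) :
    Matrix (Fin l × Fin m) (Fin r ⊕ Fin n) ℝ :=
  fromCols (H1m A B G D t l) (H2m A B t l)

/-- Stack the vectors `lam t, lam (t+1), …, lam (t+l-1)` into a vector in `ℝ^{nl}`. -/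
def stackVec (lam : ℕ → Fin n → ℝ) (t l : ℕ) : Fin l × Fin n → ℝ :=
  fun ip => lam (t + (ip.1 : ℕ)) ip.2

/-- Full-horizon KKT conditions for the weight vector `ω` with costates `lam 1, …, lam T`. -/
def KKT (A : ℕ → Matrix (Fin n) (Fin n) ℝ) (B : ℕ → Matrix (Fin n) (Fin m) ℝ)
    (G : ℕ → Matrix (Fin r) (Fin n) ℝ) (D : ℕ → Matrix (Fin r) (Fin m) ℝ) (T : ℕ)
    (ω : Fin r → ℝ) (lam : ℕ → Fin n → ℝ) : Prop :=
  -(Fx A 1 T *ᵥ stackVec lam 1 T) + Phix G 1 T *ᵥ ω = 0 ∧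
    Fu B 1 T *ᵥ stackVec lam 1 T + Phiu D 1 T *ᵥ ω = 0

/-- The natural identification of `ℝ^{(l+1)·ι}`-indices with `ℝ^{l·ι} × ℝ^{ι}`-indices. -/
def splitIdx (l : ℕ) (ι : Type*) : Fin (l + 1) × ι → (Fin l × ι) ⊕ ι :=
  fun ip => if h : (ip.1 : ℕ) < l then Sum.inl (⟨ip.1, h⟩, ip.2) else Sum.inr ip.2

/-! `F_x(t,l)` is block upper unitriangular, hence has determinant `1`. The first equation can
therefore be solved for `λ = F_x⁻¹ (Φ_x ω + V μ)`, and substituting this into the second one gives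
`H₁ ω + H₂ μ = F_u λ + Φ_u ω = 0`. -/

theorem Fx_blockTriangular (A : ℕ → Matrix (Fin n) (Fin n) ℝ) (t l : ℕ) :
    (Fx A t l).BlockTriangular Prod.fst := by
  intro ip jq hlt
  simp only [Fx, if_neg (Fin.ne_of_gt hlt),
    if_neg (show (jq.1 : ℕ) ≠ ip.1 + 1 by have := Fin.lt_def.1 hlt; omega)]

theorem det_Fx (A : ℕ → Matrix (Fin n) (Fin n) ℝ) (t l : ℕ) : (Fx A t l).det = 1 := by
  rw [(Fx_blockTriangular A t l).det_fintype]
  refine Finset.prod_eq_one fun i _ => ?_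
  suffices (Fx A t l).toSquareBlock Prod.fst i = 1 by rw [this, det_one]
  ext ⟨ip, hi⟩ ⟨jq, hj⟩
  simp [toSquareBlock_def, Fx, hi, hj, one_apply, Prod.ext_iff]

theorem elim_mulVec_add_mulVec_eq_zero {ι κ ρ ν : Type*} [Fintype ι] [DecidableEq ι]
    [Fintype ρ] [Fintype ν] {R : Type*} [CommRing R]
    {F : Matrix ι ι R} {E : Matrix κ ι R} {P : Matrix ι ρ R} {Q : Matrix κ ρ R}
    {V : Matrix ι ν R} (hF : IsUnit F.det) {lam : ι → R} {ω : ρ → R} {μ : ν → R}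
    (h₁ : -(F *ᵥ lam) + P *ᵥ ω = -(V *ᵥ μ)) (h₂ : E *ᵥ lam + Q *ᵥ ω = 0) :
    (E * F⁻¹ * P + Q) *ᵥ ω + (E * F⁻¹ * V) *ᵥ μ = 0 := by
  have hlam : F⁻¹ *ᵥ (P *ᵥ ω + V *ᵥ μ) = lam := by
    rw [show P *ᵥ ω + V *ᵥ μ = F *ᵥ lam by rw [← neg_inj, neg_add_rev, ← h₁]; abel,
      mulVec_mulVec, nonsing_inv_mul _ hF, one_mulVec]
  calc (E * F⁻¹ * P + Q) *ᵥ ω + (E * F⁻¹ * V) *ᵥ μ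
      = E *ᵥ (F⁻¹ *ᵥ (P *ᵥ ω + V *ᵥ μ)) + Q *ᵥ ω := by
        simp only [add_mulVec, ← mulVec_mulVec, mulVec_add]; abel
    _ = 0 := by rw [hlam, h₂]

theorem kernel_of_windowed_equations_general (n m r : ℕ)
    (A : ℕ → Matrix (Fin n) (Fin n) ℝ) (B : ℕ → Matrix (Fin n) (Fin m) ℝ)
    (G : ℕ → Matrix (Fin r) (Fin n) ℝ) (D : ℕ → Matrix (Fin r) (Fin m) ℝ)
    (t l : ℕ)
    (lam : Fin l × Fin n → ℝ) (ω : Fin r → ℝ) (μ : Fin n → ℝ)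
    (heq1 : -(Fx A t l *ᵥ lam) + Phix G t l *ᵥ ω = -(Vm A t l *ᵥ μ))
    (heq2 : Fu B t l *ᵥ lam + Phiu D t l *ᵥ ω = 0) :
    H1m A B G D t l *ᵥ ω + H2m A B t l *ᵥ μ = 0 ∧
      Hm A B G D t l *ᵥ Sum.elim ω μ = 0 := by
  have hkernel : H1m A B G D t l *ᵥ ω + H2m A B t l *ᵥ μ = 0 :=
    elim_mulVec_add_mulVec_eq_zero (by rw [det_Fx]; exact isUnit_one) heq1 heq2
  exact ⟨hkernel, by rw [Hm, fromCols_mulVec_sumElim, hkernel]⟩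

/-- If `λ, ω, μ` satisfy the windowed KKT-type equations, then `H₁(t,l)·ω + H₂(t,l)·μ = 0`,
i.e. the stacked vector `(ω, μ)` lies in the kernel of the recovery matrix `H(t,l)`. -/
theorem kernel_of_windowed_equations (n m r T : ℕ) (hn : 0 < n) (hm : 0 < m) (hr : 0 < r) (hT : 1 ≤ T)
    (A : ℕ → Matrix (Fin n) (Fin n) ℝ) (B : ℕ → Matrix (Fin n) (Fin m) ℝ)
    (G : ℕ → Matrix (Fin r) (Fin n) ℝ) (D : ℕ → Matrix (Fin r) (Fin m) ℝ)
    (hAT : A T = 1)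
    (t l : ℕ) (ht : 1 ≤ t) (hl : 1 ≤ l) (htl : t + l - 1 ≤ T)
    (lam : Fin l × Fin n → ℝ) (ω : Fin r → ℝ) (μ : Fin n → ℝ)
    (heq1 : -(Fx A t l *ᵥ lam) + Phix G t l *ᵥ ω = -(Vm A t l *ᵥ μ))
    (heq2 : Fu B t l *ᵥ lam + Phiu D t l *ᵥ ω = 0) :
    H1m A B G D t l *ᵥ ω + H2m A B t l *ᵥ μ = 0 ∧
      Hm A B G D t l *ᵥ Sum.elim ω μ = 0 :=
  kernel_of_windowed_equations_general n m r A B G D t l lam ω μ heq1 heq2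

end
end

section
/- Suppose the full-horizon KKT conditions hold for ω ∈ ℝ^r with costates λ = (λ_1,…,λ_T) ∈ (ℝ^n)^T, and adopt the convention λ_{T+1} = 0. Then for every window 1 ≤ t ≤ t+l−1 ≤ T, the restricted costate stack λ_{t:t+l−1} = (λ_t,…,λ_{t+l−1}) ∈ ℝ^{nl} satisfies −F_x(t,l)·λ_{t:t+l−1} + Φ_x(t,l)·ω = −V(t,l)·λ_{t+l} and F_u(t,l)·λ_{t:t+l−1} + Φ_u(t,l)·ω = 0. -/
/-!
Block row `i` of either system is a single time step `k = t + i`: the costate recursion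
`λ_k = A_kᵀ λ_{k+1} + G_kᵀ ω` and the stationarity condition `B_kᵀ λ_k + D_kᵀ ω = 0`.
The last block row of `F_x(t,l)` lacks the coupling to `λ_{t+l}`, which `V(t,l) λ_{t+l}`
restores; on the full horizon this term is `V(1,T) λ_{T+1} = 0`. So the window equations are
a subset of the rows of the full-horizon KKT system.
-/

open Matrix

noncomputable section

variable {n m r : ℕ}

@[simp]
lemma stackVec_apply (f : ℕ → Fin n → ℝ) (t l : ℕ) (i : Fin l) (p : Fin n) :
    stackVec f t l (i, p) = f (t + i) p :=
  rfl

lemma stackVec_eq_zero_of_le {f : ℕ → Fin n → ℝ} {s L t l : ℕ} (h : stackVec f s L = 0)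
    (hst : s ≤ t) (hlL : t + l ≤ s + L) : stackVec f t l = 0 := by
  ext ⟨i, p⟩
  have hi : t + i - s < L := by omega
  simpa [show s + (t + i - s) = t + i by omega] using congrFun h (⟨t + i - s, hi⟩, p)

lemma Fx_mulVec_apply (A : ℕ → Matrix (Fin n) (Fin n) ℝ) (t l : ℕ) (v : Fin l × Fin n → ℝ)
    (i : Fin l) (p : Fin n) :
    (Fx A t l *ᵥ v) (i, p) = v (i, p) -
      if h : (i : ℕ) + 1 < l then ((A (t + i))ᵀ *ᵥ fun q => v (⟨i + 1, h⟩, q)) p else 0 := by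
  have hrow : ∀ j : Fin l, ∑ q, Fx A t l (i, p) (j, q) * v (j, q) =
      (if i = j then v (j, p) else 0) -
        if (j : ℕ) = i + 1 then ((A (t + i))ᵀ *ᵥ fun q => v (j, q)) p else 0 := by
    intro j
    by_cases hij : i = j
    · subst hij
      simp [Fx]
    · by_cases hj : (j : ℕ) = i + 1
      · simp [Fx, hij, hj, mulVec, dotProduct]
      · simp [Fx, hij, hj]
  simp only [mulVec, dotProduct, Fintype.sum_prod_type, hrow, Finset.sum_sub_distrib,
    Finset.sum_ite_eq, Finset.mem_univ, if_true]
  congr 1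
  split_ifs with h
  · rw [Finset.sum_eq_single ⟨i + 1, h⟩ (fun j _ hj => if_neg (fun h' => hj (Fin.ext h')))
      (by simp)]
    simp
  · exact Finset.sum_eq_zero fun j _ => if_neg (by omega)

lemma Fx_mulVec_stackVec_sub_Vm_mulVec (A : ℕ → Matrix (Fin n) (Fin n) ℝ)
    (lam : ℕ → Fin n → ℝ) (t l : ℕ) :
    Fx A t l *ᵥ stackVec lam t l - Vm A t l *ᵥ lam (t + l) =
      stackVec (fun k => lam k - (A k)ᵀ *ᵥ lam (k + 1)) t l := by
  ext ⟨i, p⟩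
  rw [Pi.sub_apply, Fx_mulVec_apply]
  split_ifs with h
  · have hV : (Vm A t l *ᵥ lam (t + l)) (i, p) = 0 := by
      simp [Vm, mulVec, show (i : ℕ) ≠ l - 1 by omega]
    simp [hV, add_assoc]
  · have hi : (i : ℕ) = l - 1 := by omega
    simp [Vm, mulVec, dotProduct, hi, show t + (l - 1) = t + l - 1 by omega,
      show t + l - 1 + 1 = t + l by omega]

lemma Fu_mulVec_stackVec (B : ℕ → Matrix (Fin n) (Fin m) ℝ) (lam : ℕ → Fin n → ℝ)
    (t l : ℕ) : Fu B t l *ᵥ stackVec lam t l = stackVec (fun k => (B k)ᵀ *ᵥ lam k) t l := by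
  ext ⟨i, p⟩
  rw [mulVec, dotProduct, Fintype.sum_prod_type,
    Finset.sum_eq_single i (fun j _ hj => by simp [Fu, Ne.symm hj]) (by simp)]
  simp [Fu, mulVec, dotProduct]

lemma Phix_mulVec (G : ℕ → Matrix (Fin r) (Fin n) ℝ) (ω : Fin r → ℝ) (t l : ℕ) :
    Phix G t l *ᵥ ω = stackVec (fun k => (G k)ᵀ *ᵥ ω) t l :=
  rfl

lemma Phiu_mulVec (D : ℕ → Matrix (Fin r) (Fin m) ℝ) (ω : Fin r → ℝ) (t l : ℕ) :
    Phiu D t l *ᵥ ω = stackVec (fun k => (D k)ᵀ *ᵥ ω) t l :=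
  rfl

lemma neg_Fx_mulVec_add_Phix_mulVec_add_Vm_mulVec (A : ℕ → Matrix (Fin n) (Fin n) ℝ)
    (G : ℕ → Matrix (Fin r) (Fin n) ℝ) (ω : Fin r → ℝ) (lam : ℕ → Fin n → ℝ) (t l : ℕ) :
    -(Fx A t l *ᵥ stackVec lam t l) + Phix G t l *ᵥ ω + Vm A t l *ᵥ lam (t + l) =
      stackVec (fun k => (G k)ᵀ *ᵥ ω - (lam k - (A k)ᵀ *ᵥ lam (k + 1))) t l :=
  calc -(Fx A t l *ᵥ stackVec lam t l) + Phix G t l *ᵥ ω + Vm A t l *ᵥ lam (t + l)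
      _ = Phix G t l *ᵥ ω - (Fx A t l *ᵥ stackVec lam t l - Vm A t l *ᵥ lam (t + l)) := by abel
      _ = _ := by rw [Phix_mulVec, Fx_mulVec_stackVec_sub_Vm_mulVec]; rfl

lemma Fu_mulVec_add_Phiu_mulVec (B : ℕ → Matrix (Fin n) (Fin m) ℝ)
    (D : ℕ → Matrix (Fin r) (Fin m) ℝ) (ω : Fin r → ℝ) (lam : ℕ → Fin n → ℝ) (t l : ℕ) :
    Fu B t l *ᵥ stackVec lam t l + Phiu D t l *ᵥ ω =
      stackVec (fun k => (B k)ᵀ *ᵥ lam k + (D k)ᵀ *ᵥ ω) t l := by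
  rw [Fu_mulVec_stackVec, Phiu_mulVec]
  rfl

theorem windowed_equations_of_KKT_general (n m r T : ℕ)
    (A : ℕ → Matrix (Fin n) (Fin n) ℝ) (B : ℕ → Matrix (Fin n) (Fin m) ℝ)
    (G : ℕ → Matrix (Fin r) (Fin n) ℝ) (D : ℕ → Matrix (Fin r) (Fin m) ℝ)
    (ω : Fin r → ℝ) (lam : ℕ → Fin n → ℝ)
    (hKKT : KKT A B G D T ω lam) (hlamT : lam (T + 1) = 0)
    (t l : ℕ) (ht : 1 ≤ t) (htl : t + l - 1 ≤ T) :
    -(Fx A t l *ᵥ stackVec lam t l) + Phix G t l *ᵥ ω = -(Vm A t l *ᵥ lam (t + l)) ∧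
      Fu B t l *ᵥ stackVec lam t l + Phiu D t l *ᵥ ω = 0 := by
  obtain ⟨hx, hu⟩ := hKKT
  have hwindow : t + l ≤ 1 + T := by omega
  constructor
  · rw [eq_neg_iff_add_eq_zero, neg_Fx_mulVec_add_Phix_mulVec_add_Vm_mulVec]
    refine stackVec_eq_zero_of_le ?_ ht hwindow
    rwa [← neg_Fx_mulVec_add_Phix_mulVec_add_Vm_mulVec, add_comm 1 T, hlamT, mulVec_zero,
      add_zero]
  · rw [Fu_mulVec_add_Phiu_mulVec] at hu ⊢
    exact stackVec_eq_zero_of_le hu ht hwindow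

/-- If the full-horizon KKT conditions hold (with the convention `λ_{T+1} = 0`), then for
every window `1 ≤ t ≤ t+l−1 ≤ T` the restricted costate stack satisfies the windowed
equations. -/
theorem windowed_equations_of_KKT (n m r T : ℕ) (hn : 0 < n) (hm : 0 < m) (hr : 0 < r) (hT : 1 ≤ T)
    (A : ℕ → Matrix (Fin n) (Fin n) ℝ) (B : ℕ → Matrix (Fin n) (Fin m) ℝ)
    (G : ℕ → Matrix (Fin r) (Fin n) ℝ) (D : ℕ → Matrix (Fin r) (Fin m) ℝ)
    (hAT : A T = 1)
    (ω : Fin r → ℝ) (lam : ℕ → Fin n → ℝ)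
    (hKKT : KKT A B G D T ω lam) (hlamT : lam (T + 1) = 0)
    (t l : ℕ) (ht : 1 ≤ t) (hl : 1 ≤ l) (htl : t + l - 1 ≤ T) :
    -(Fx A t l *ᵥ stackVec lam t l) + Phix G t l *ᵥ ω = -(Vm A t l *ᵥ lam (t + l)) ∧
      Fu B t l *ᵥ stackVec lam t l + Phiu D t l *ᵥ ω = 0 :=
  windowed_equations_of_KKT_general n m r T A B G D ω lam hKKT hlamT t l ht htl

end
end

section
/- Suppose the full-horizon KKT conditions hold for ω ∈ ℝ^r with costates λ = (λ_1,…,λ_T) ∈ (ℝ^n)^T, and adopt the convention λ_{T+1} = 0. Then for every window 1 ≤ t ≤ t+l−1 ≤ T, the stacked vector (ω, λ_{t+l}) ∈ ℝ^{r+n} lies in the kernel of the recovery matrix H(t,l), i.e. H(t,l)·(ω, λ_{t+l}) = 0. -/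
open Matrix

noncomputable section

variable {n m r : ℕ}

/-! The first KKT block is the backward costate recursion `λ_k = A_kᵀ λ_{k+1} + G_kᵀ ω` for
`1 ≤ k ≤ T` (its last row is the case `λ_{T+1} = 0`), and that recursion restricted to a window
reads `F_x λ_window = Φ_x ω + V λ_{t+l}`. As `F_x` is block unitriangular it is invertible, and
substituting `λ_window = F_x⁻¹ (Φ_x ω + V λ_{t+l})` into the window rows of the second block,
`F_u λ_window + Φ_u ω = 0`, is exactly `H (ω, λ_{t+l}) = 0`. -/

theorem fromCols_mulVec_sumElim_eq_zero_of_mulVec_eq {R ι κ ρ σ : Type*} [CommRing R]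
    [Fintype ι] [DecidableEq ι] [Fintype ρ] [Fintype σ] {F : Matrix ι ι R} (hF : IsUnit F.det)
    (U : Matrix κ ι R) (X : Matrix ι ρ R) (Y : Matrix κ ρ R) (V : Matrix ι σ R)
    {x : ι → R} {ω : ρ → R} {μ : σ → R}
    (hx : F *ᵥ x = X *ᵥ ω + V *ᵥ μ) (hu : U *ᵥ x + Y *ᵥ ω = 0) :
    fromCols (U * F⁻¹ * X + Y) (U * F⁻¹ * V) *ᵥ Sum.elim ω μ = 0 := by
  have hx' : x = F⁻¹ *ᵥ (X *ᵥ ω + V *ᵥ μ) := by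
    rw [← hx, mulVec_mulVec, nonsing_inv_mul _ hF, one_mulVec]
  rw [fromCols_mulVec_sumElim, add_mulVec, ← mulVec_mulVec, ← mulVec_mulVec, ← mulVec_mulVec,
    ← mulVec_mulVec, add_right_comm, ← mulVec_add, ← mulVec_add, ← hx', hu]

theorem forall_fin_add_iff {P : ℕ → Prop} {t l : ℕ} :
    (∀ i : Fin l, P (t + i)) ↔ ∀ k, t ≤ k → k < t + l → P k :=
  ⟨fun h k hk hkl => by simpa [Nat.add_sub_cancel' hk] using h ⟨k - t, by omega⟩,
    fun h i => h _ (by omega) (by omega)⟩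

theorem Fx_mulVec_stackVec_sub_Vm_mulVec_apply (A : ℕ → Matrix (Fin n) (Fin n) ℝ)
    (lam : ℕ → Fin n → ℝ) (t l : ℕ) (i : Fin l) (p : Fin n) :
    (Fx A t l *ᵥ stackVec lam t l - Vm A t l *ᵥ lam (t + l)) (i, p) =
      (lam (t + i) - (A (t + i))ᵀ *ᵥ lam (t + i + 1)) p := by
  simp only [Pi.sub_apply, mulVec, dotProduct, Fintype.sum_prod_type]
  by_cases h : (i : ℕ) + 1 < l
  · have hne : i ≠ ⟨i + 1, h⟩ := fun e => by simpa using congrArg Fin.val e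
    have hlast : (i : ℕ) ≠ l - 1 := by omega
    rw [Fintype.sum_eq_add i ⟨i + 1, h⟩ hne]
    · simp [Fx, Vm, stackVec, hne, hlast, add_assoc, sub_eq_add_neg]
    · intro j hj
      have : (j : ℕ) ≠ i + 1 := fun e => hj.2 (Fin.ext e)
      simp [Fx, Ne.symm hj.1, this]
  · have hlast : (i : ℕ) = l - 1 := by omega
    have hnext : t + l = t + i + 1 := by omega
    rw [Fintype.sum_eq_single i]
    · simp [Fx, Vm, stackVec, hlast, hnext]
    · intro j hj
      have : (j : ℕ) ≠ i + 1 := by omega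
      simp [Fx, Ne.symm hj, this]

theorem Fu_mulVec_stackVec_apply (B : ℕ → Matrix (Fin n) (Fin m) ℝ)
    (lam : ℕ → Fin n → ℝ) (t l : ℕ) (i : Fin l) (p : Fin m) :
    (Fu B t l *ᵥ stackVec lam t l) (i, p) = ((B (t + i))ᵀ *ᵥ lam (t + i)) p := by
  simp only [mulVec, dotProduct, Fintype.sum_prod_type]
  rw [Fintype.sum_eq_single i fun j hj => by simp [Fu, Ne.symm hj]]
  simp [Fu, stackVec]

theorem Phix_mulVec_apply (G : ℕ → Matrix (Fin r) (Fin n) ℝ) (ω : Fin r → ℝ) (t l : ℕ)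
    (i : Fin l) (p : Fin n) : (Phix G t l *ᵥ ω) (i, p) = ((G (t + i))ᵀ *ᵥ ω) p :=
  rfl

theorem Phiu_mulVec_apply (D : ℕ → Matrix (Fin r) (Fin m) ℝ) (ω : Fin r → ℝ) (t l : ℕ)
    (i : Fin l) (p : Fin m) : (Phiu D t l *ᵥ ω) (i, p) = ((D (t + i))ᵀ *ᵥ ω) p :=
  rfl

theorem Fx_mulVec_stackVec_eq_iff (A : ℕ → Matrix (Fin n) (Fin n) ℝ)
    (G : ℕ → Matrix (Fin r) (Fin n) ℝ) (ω : Fin r → ℝ) (lam : ℕ → Fin n → ℝ) (t l : ℕ) :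
    Fx A t l *ᵥ stackVec lam t l = Phix G t l *ᵥ ω + Vm A t l *ᵥ lam (t + l) ↔
      ∀ k, t ≤ k → k < t + l → lam k = (A k)ᵀ *ᵥ lam (k + 1) + (G k)ᵀ *ᵥ ω := by
  rw [← sub_eq_iff_eq_add, funext_iff, Prod.forall, ← forall_fin_add_iff]
  simp only [Fx_mulVec_stackVec_sub_Vm_mulVec_apply, Phix_mulVec_apply, ← funext_iff,
    sub_eq_iff_eq_add']

theorem Fu_mulVec_stackVec_add_eq_zero_iff (B : ℕ → Matrix (Fin n) (Fin m) ℝ)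
    (D : ℕ → Matrix (Fin r) (Fin m) ℝ) (ω : Fin r → ℝ) (lam : ℕ → Fin n → ℝ) (t l : ℕ) :
    Fu B t l *ᵥ stackVec lam t l + Phiu D t l *ᵥ ω = 0 ↔
      ∀ k, t ≤ k → k < t + l → (B k)ᵀ *ᵥ lam k + (D k)ᵀ *ᵥ ω = 0 := by
  rw [funext_iff, Prod.forall, ← forall_fin_add_iff]
  refine forall_congr' fun i => ?_
  simp only [funext_iff, Pi.add_apply, Fu_mulVec_stackVec_apply, Phiu_mulVec_apply,
    Pi.zero_apply]

theorem kernel_of_KKT_general (n m r T : ℕ)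
    (A : ℕ → Matrix (Fin n) (Fin n) ℝ) (B : ℕ → Matrix (Fin n) (Fin m) ℝ)
    (G : ℕ → Matrix (Fin r) (Fin n) ℝ) (D : ℕ → Matrix (Fin r) (Fin m) ℝ)
    (ω : Fin r → ℝ) (lam : ℕ → Fin n → ℝ)
    (hKKT : KKT A B G D T ω lam) (hlamT : lam (T + 1) = 0)
    (t l : ℕ) (ht : 1 ≤ t) (htl : t + l - 1 ≤ T) :
    Hm A B G D t l *ᵥ Sum.elim ω (lam (t + l)) = 0 := by
  obtain ⟨hx, hu⟩ := hKKT
  have hcostate := (Fx_mulVec_stackVec_eq_iff A G ω lam 1 T).1 <| by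
    rwa [add_comm 1 T, hlamT, mulVec_zero, add_zero, ← neg_add_eq_zero]
  have hcontrol := (Fu_mulVec_stackVec_add_eq_zero_iff B D ω lam 1 T).1 hu
  exact fromCols_mulVec_sumElim_eq_zero_of_mulVec_eq (det_Fx A t l ▸ isUnit_one) _ _ _ _
    ((Fx_mulVec_stackVec_eq_iff A G ω lam t l).2 fun k hk hkl => hcostate k (by omega) (by omega))
    ((Fu_mulVec_stackVec_add_eq_zero_iff B D ω lam t l).2
      fun k hk hkl => hcontrol k (by omega) (by omega))

/-- If the full-horizon KKT conditions hold (with the convention `λ_{T+1} = 0`), then for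
every window `1 ≤ t ≤ t+l−1 ≤ T` the stacked vector `(ω, λ_{t+l})` lies in the kernel of the
recovery matrix `H(t,l)`. -/
theorem kernel_of_KKT (n m r T : ℕ) (hn : 0 < n) (hm : 0 < m) (hr : 0 < r) (hT : 1 ≤ T)
    (A : ℕ → Matrix (Fin n) (Fin n) ℝ) (B : ℕ → Matrix (Fin n) (Fin m) ℝ)
    (G : ℕ → Matrix (Fin r) (Fin n) ℝ) (D : ℕ → Matrix (Fin r) (Fin m) ℝ)
    (hAT : A T = 1)
    (ω : Fin r → ℝ) (lam : ℕ → Fin n → ℝ)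
    (hKKT : KKT A B G D T ω lam) (hlamT : lam (T + 1) = 0)
    (t l : ℕ) (ht : 1 ≤ t) (hl : 1 ≤ l) (htl : t + l - 1 ≤ T) :
    Hm A B G D t l *ᵥ Sum.elim ω (lam (t + l)) = 0 :=
  kernel_of_KKT_general n m r T A B G D ω lam hKKT hlamT t l ht htl

end
end

section
/- (Lemma 1, iterative property.) For all integers 1 ≤ t ≤ t+l−1 < T, the recovery matrix satisfies H(t,l+1) = M·N, where M ∈ ℝ^{m(l+1)×(r+n)} is the block matrix with top block row [H₁(t,l) H₂(t,l)] and bottom block row [D_{t+l}ᵀ B_{t+l}ᵀ], and N ∈ ℝ^{(r+n)×(r+n)} is the block matrix with block rows [I_r 0] and [G_{t+l}ᵀ A_{t+l}ᵀ]. -/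
/-!
Split the `l + 1` blocks of each stacked matrix into the first `l` and the last one. Then
`F_x(t,l+1) = [F_x(t,l), -V(t,l); 0, I]` and `F_u(t,l+1) = diag(F_u(t,l), B_{t+l}ᵀ)`, so
`F_u(t,l+1) F_x(t,l+1)⁻¹ = [F_u(t,l) F_x(t,l)⁻¹, H₂(t,l); 0, B_{t+l}ᵀ]`. Multiplying by the split
forms of `Φ_x`, `Φ_u` and `V` gives `H₁(t,l+1) = [H₁ + H₂ G_{t+l}ᵀ; D_{t+l}ᵀ + B_{t+l}ᵀ G_{t+l}ᵀ]`
and `H₂(t,l+1) = [H₂ A_{t+l}ᵀ; B_{t+l}ᵀ A_{t+l}ᵀ]`, the two block columns of `M · N`. The same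
splitting shows by induction on `l` that `det F_x(t,l) = 1`, so the inverses are genuine.
-/

open Matrix

noncomputable section

variable {n m r : ℕ}

def splitEquiv (l : ℕ) (ι : Type*) : Fin (l + 1) × ι ≃ (Fin l × ι) ⊕ ι where
  toFun := splitIdx l ι
  invFun := Sum.elim (fun ip => (ip.1.castSucc, ip.2)) (fun p => (Fin.last l, p))
  left_inv := by
    rintro ⟨i, p⟩
    by_cases h : (i : ℕ) < l
    · simp [splitIdx, h]
    · simp [splitIdx, h, Fin.ext_iff]
      omega
  right_inv := by
    rintro (⟨i, p⟩ | p) <;> simp [splitIdx]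

lemma coe_splitEquiv (l : ℕ) (ι : Type*) : ⇑(splitEquiv l ι) = splitIdx l ι := rfl

/- Not proved by `rfl`: `simp` would then use them as definitional rewrites, which leave the
`Decidable` instances of the `if`s in `Fx` and `Fu` untouched and produce ill-typed terms. -/
@[simp]
lemma splitEquiv_symm_inl (l : ℕ) (ι : Type*) (i : Fin l) (p : ι) :
    (splitEquiv l ι).symm (Sum.inl (i, p)) = (i.castSucc, p) :=
  (splitEquiv l ι).symm_apply_eq.2 (by simp [splitEquiv, splitIdx])

@[simp]
lemma splitEquiv_symm_inr (l : ℕ) (ι : Type*) (p : ι) :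
    (splitEquiv l ι).symm (Sum.inr p) = (Fin.last l, p) :=
  (splitEquiv l ι).symm_apply_eq.2 (by simp [splitEquiv, splitIdx])

theorem Matrix.fromRows_add_fromRows {α m₁ m₂ k : Type*} [Add α] (A₁ B₁ : Matrix m₁ k α)
    (A₂ B₂ : Matrix m₂ k α) :
    fromRows A₁ A₂ + fromRows B₁ B₂ = fromRows (A₁ + B₁) (A₂ + B₂) := by
  ext (i | i) j <;> rfl

theorem Matrix.fromCols_submatrix_id {α k m₁ n₁ n₂ : Type*} (A₁ : Matrix m₁ n₁ α)
    (A₂ : Matrix m₁ n₂ α) (f : k → m₁) :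
    (fromCols A₁ A₂).submatrix f id = fromCols (A₁.submatrix f id) (A₂.submatrix f id) := by
  ext i (j | j) <;> rfl

section Recursion

variable (A : ℕ → Matrix (Fin n) (Fin n) ℝ) (B : ℕ → Matrix (Fin n) (Fin m) ℝ)
  (G : ℕ → Matrix (Fin r) (Fin n) ℝ) (D : ℕ → Matrix (Fin r) (Fin m) ℝ) (t l : ℕ)

lemma Fx_succ_submatrix :
    (Fx A t (l + 1)).submatrix (splitEquiv l (Fin n)).symm (splitEquiv l (Fin n)).symm =
      fromBlocks (Fx A t l) (-Vm A t l) 0 1 := by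
  ext (⟨i, p⟩ | p) (⟨j, q⟩ | q)
  · simp [Fx, Fin.castSucc_inj]
  · by_cases h : l = i + 1
    · simp [Fx, Vm, h]
    · simp [Fx, Vm, h, (Fin.castSucc_lt_last i).ne, show (i : ℕ) ≠ l - 1 by omega]
  · simp [Fx, (Fin.castSucc_lt_last j).ne', show (j : ℕ) ≠ l + 1 by omega]
  · simp [Fx, one_apply]

lemma Fu_succ_submatrix :
    (Fu B t (l + 1)).submatrix (splitEquiv l (Fin m)).symm (splitEquiv l (Fin n)).symm =
      fromBlocks (Fu B t l) 0 0 (B (t + l))ᵀ := by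
  ext (⟨i, p⟩ | p) (⟨j, q⟩ | q)
  · simp [Fu]
  · simp [Fu, (Fin.castSucc_lt_last i).ne]
  · simp [Fu, (Fin.castSucc_lt_last j).ne']
  · simp [Fu]

lemma Phix_succ_submatrix :
    (Phix G t (l + 1)).submatrix (splitEquiv l (Fin n)).symm id =
      fromRows (Phix G t l) (G (t + l))ᵀ := by
  ext (⟨i, p⟩ | p) q <;> rfl

lemma Phiu_succ_submatrix :
    (Phiu D t (l + 1)).submatrix (splitEquiv l (Fin m)).symm id =
      fromRows (Phiu D t l) (D (t + l))ᵀ := by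
  ext (⟨i, p⟩ | p) q <;> rfl

lemma Vm_succ_submatrix :
    (Vm A t (l + 1)).submatrix (splitEquiv l (Fin n)).symm id = fromRows 0 (A (t + l))ᵀ := by
  ext (⟨i, p⟩ | p) q
  · simp [Vm, i.isLt.ne]
  · simp [Vm]

lemma isUnit_Fx : IsUnit (Fx A t l) := by
  rw [isUnit_iff_isUnit_det]
  induction l with
  | zero => simp
  | succ l ih =>
    rw [← det_submatrix_equiv_self (splitEquiv l (Fin n)).symm, Fx_succ_submatrix,
      det_fromBlocks_zero₂₁, det_one, mul_one]
    exact ih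

lemma Fx_succ_inv_submatrix :
    (Fx A t (l + 1))⁻¹.submatrix (splitEquiv l (Fin n)).symm (splitEquiv l (Fin n)).symm =
      fromBlocks (Fx A t l)⁻¹ ((Fx A t l)⁻¹ * Vm A t l) 0 1 := by
  rw [← inv_submatrix_equiv, Fx_succ_submatrix,
    inv_fromBlocks_zero₂₁_of_isUnit_iff _ _ _ (iff_of_true (isUnit_Fx A t l) isUnit_one)]
  simp

lemma Fu_mul_Fx_inv_succ_submatrix :
    (Fu B t (l + 1) * (Fx A t (l + 1))⁻¹).submatrix (splitEquiv l (Fin m)).symm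
        (splitEquiv l (Fin n)).symm =
      fromBlocks (Fu B t l * (Fx A t l)⁻¹) (H2m A B t l) 0 (B (t + l))ᵀ := by
  rw [← submatrix_mul_equiv _ _ _ (splitEquiv l (Fin n)).symm, Fu_succ_submatrix,
    Fx_succ_inv_submatrix, fromBlocks_multiply, H2m]
  simp [Matrix.mul_assoc]

lemma H1m_succ_submatrix :
    (H1m A B G D t (l + 1)).submatrix (splitEquiv l (Fin m)).symm id =
      fromRows (H1m A B G D t l + H2m A B t l * (G (t + l))ᵀ)
        ((D (t + l))ᵀ + (B (t + l))ᵀ * (G (t + l))ᵀ) := by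
  rw [H1m, submatrix_add, Pi.add_apply, Pi.add_apply,
    ← submatrix_mul_equiv _ _ _ (splitEquiv l (Fin n)).symm, Fu_mul_Fx_inv_succ_submatrix,
    Phix_succ_submatrix, Phiu_succ_submatrix, fromBlocks_mul_fromRows, fromRows_add_fromRows, H1m]
  congr 1
  · abel
  · rw [Matrix.zero_mul, zero_add, add_comm]

lemma H2m_succ_submatrix :
    (H2m A B t (l + 1)).submatrix (splitEquiv l (Fin m)).symm id =
      fromRows (H2m A B t l * (A (t + l))ᵀ) ((B (t + l))ᵀ * (A (t + l))ᵀ) := by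
  rw [H2m, ← submatrix_mul_equiv _ _ _ (splitEquiv l (Fin n)).symm, Fu_mul_Fx_inv_succ_submatrix,
    Vm_succ_submatrix, fromBlocks_mul_fromRows]
  simp

lemma Hm_succ_submatrix :
    (Hm A B G D t (l + 1)).submatrix (splitEquiv l (Fin m)).symm id =
      fromBlocks (H1m A B G D t l) (H2m A B t l) (D (t + l))ᵀ (B (t + l))ᵀ *
        fromBlocks (1 : Matrix (Fin r) (Fin r) ℝ) (0 : Matrix (Fin r) (Fin n) ℝ)
          (G (t + l))ᵀ (A (t + l))ᵀ := by
  rw [Hm, fromCols_submatrix_id, H1m_succ_submatrix, H2m_succ_submatrix,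
    fromCols_fromRows_eq_fromBlocks, fromBlocks_multiply]
  simp

end Recursion

theorem recovery_matrix_iterative_general (n m r : ℕ)
    (A : ℕ → Matrix (Fin n) (Fin n) ℝ) (B : ℕ → Matrix (Fin n) (Fin m) ℝ)
    (G : ℕ → Matrix (Fin r) (Fin n) ℝ) (D : ℕ → Matrix (Fin r) (Fin m) ℝ)
    (t l : ℕ) :
    Hm A B G D t (l + 1) =
      (fromBlocks (H1m A B G D t l) (H2m A B t l) ((D (t + l))ᵀ) ((B (t + l))ᵀ) *
        fromBlocks (1 : Matrix (Fin r) (Fin r) ℝ) (0 : Matrix (Fin r) (Fin n) ℝ)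
          ((G (t + l))ᵀ) ((A (t + l))ᵀ)).submatrix (splitIdx l (Fin m)) id := by
  rw [← Hm_succ_submatrix, ← coe_splitEquiv, submatrix_submatrix, Equiv.symm_comp_self,
    Function.comp_id, submatrix_id_id]

/-- Lemma 1 (iterative property): `H(t,l+1) = M·N` with
`M = [H₁(t,l) H₂(t,l); D_{t+l}ᵀ B_{t+l}ᵀ]` and `N = [I 0; G_{t+l}ᵀ A_{t+l}ᵀ]`,
under the natural identification of row indices. -/
theorem recovery_matrix_iterative (n m r T : ℕ) (hn : 0 < n) (hm : 0 < m) (hr : 0 < r) (hT : 1 ≤ T)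
    (A : ℕ → Matrix (Fin n) (Fin n) ℝ) (B : ℕ → Matrix (Fin n) (Fin m) ℝ)
    (G : ℕ → Matrix (Fin r) (Fin n) ℝ) (D : ℕ → Matrix (Fin r) (Fin m) ℝ)
    (hAT : A T = 1)
    (t l : ℕ) (ht : 1 ≤ t) (hl : 1 ≤ l) (htl : t + l - 1 < T) :
    Hm A B G D t (l + 1) =
      (fromBlocks (H1m A B G D t l) (H2m A B t l) ((D (t + l))ᵀ) ((B (t + l))ᵀ) *
        fromBlocks (1 : Matrix (Fin r) (Fin r) ℝ) (0 : Matrix (Fin r) (Fin n) ℝ)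
          ((G (t + l))ᵀ) ((A (t + l))ᵀ)).submatrix (splitIdx l (Fin m)) id :=
  recovery_matrix_iterative_general n m r A B G D t l

end
end
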